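/- With V, g, P, π, ω, Ric, Ric⁵ and r, r⁵ as in the pointwise model, the manifold is of Einstein type of the fifth kind if and only if it is quasi-Einstein with Ricci tensor Ric = (1/(2n))·(2r − (n−1)·π(P))·g + ((n−1)/2)·(π⊗π); that is, Ric⁵ = (r⁵/n)·g holds if and only if Ric = (1/(2n))·(2r − (n−1)·π(P))·g + ((n−1)/2)·(π⊗π). -/

import Mathlib

/-!
Since `Ric⁵ = Ric - c • g - ((n-1)/2) • π⊗π` with `c = ((n-1)/2)(3ω + π(P))`, the equation
`Ric⁵ = t • g` is equivalent to `Ric = (t + c) • g + ((n-1)/2) • π⊗π` for every scalar `t`.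
For `t = r⁵/n`, taking `g`-traces with `tr_g g = n` and `tr_g (π⊗π) = π(P)` gives
`t + c = (2r - (n-1) π(P)) / (2n)`.
-/

/-- The `g`-trace of a bilinear form `B`: the trace of the endomorphism
`(g♭)⁻¹ ∘ B♭` of `V`, where `B♭ : V → V*` is `X ↦ B(X,·)`. -/
noncomputable def trG {V : Type*} [AddCommGroup V] [Module ℝ V] [FiniteDimensional ℝ V]
    (g : LinearMap.BilinForm ℝ V) (hg : g.Nondegenerate)
    (B : LinearMap.BilinForm ℝ V) : ℝ :=
  LinearMap.trace ℝ V ((g.toDual hg).symm.toLinearMap ∘ₗ B)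

theorem eq_smul_iff_of_eq_sub_sub {R M : Type*} [CommRing R] [AddCommGroup M] [Module R M]
    {A B C D : M} {c d : R} (hD : D = A - c • B - d • C) (t : R) :
    D = t • B ↔ A = (t + c) • B + d • C := by
  subst hD
  constructor <;> intro h
  · rw [add_smul, ← h]; module
  · rw [h]; module

section trG

variable {V : Type*} [AddCommGroup V] [Module ℝ V] [FiniteDimensional ℝ V]
  {g : LinearMap.BilinForm ℝ V} (hg : g.Nondegenerate)

theorem trG_sub (B C : LinearMap.BilinForm ℝ V) :
    trG g hg (B - C) = trG g hg B - trG g hg C := by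
  simp only [trG, LinearMap.comp_sub, map_sub]

theorem trG_smul (c : ℝ) (B : LinearMap.BilinForm ℝ V) :
    trG g hg (c • B) = c * trG g hg B := by
  simp only [trG, LinearMap.comp_smul, map_smul, smul_eq_mul]

theorem trG_self : trG g hg g = Module.finrank ℝ V := by
  have hid : (g.toDual hg).symm.toLinearMap ∘ₗ g = LinearMap.id :=
    LinearMap.ext (g.toDual hg).symm_apply_apply
  rw [trG, hid, LinearMap.trace_id]

theorem trG_smulRight (φ ψ : Module.Dual ℝ V) :
    trG g hg (φ.smulRight ψ) = φ ((g.toDual hg).symm ψ) := by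
  have hcomp : (g.toDual hg).symm.toLinearMap ∘ₗ φ.smulRight ψ
      = LinearMap.toSpanSingleton ℝ V ((g.toDual hg).symm ψ) ∘ₗ φ := by
    ext v
    simp
  rw [trG, hcomp, LinearMap.trace_comp_comm']
  have hscalar : φ ∘ₗ LinearMap.toSpanSingleton ℝ V ((g.toDual hg).symm ψ)
      = φ ((g.toDual hg).symm ψ) • LinearMap.id := by
    ext
    simp [mul_comm]
  simp [hscalar]

theorem toDual_symm_flip (hgs : g.IsSymm) (P : V) : (g.toDual hg).symm (g.flip P) = P := by
  rw [LinearEquiv.symm_apply_eq]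
  ext v
  exact hgs.eq v P

end trG

theorem stmt_6_general {V : Type*} [AddCommGroup V] [Module ℝ V] [FiniteDimensional ℝ V]
    (n : ℕ) (hn : 3 ≤ n) (hdim : Module.finrank ℝ V = n)
    (g : LinearMap.BilinForm ℝ V) (hg : g.Nondegenerate) (hgs : g.IsSymm)
    (P : V) (π : V →ₗ[ℝ] ℝ) (hπ : π = g.flip P) (ω : ℝ)
    (ππ : LinearMap.BilinForm ℝ V) (hππ : ππ = π.smulRight π)
    (Ric : LinearMap.BilinForm ℝ V)
    (Ric5 : LinearMap.BilinForm ℝ V)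
    (hRic5 : Ric5 = Ric - ((((n : ℝ) - 1) / 2) * (3 * ω + π P)) • g - (((n : ℝ) - 1) / 2) • ππ) :
    Ric5 = (trG g hg Ric5 / (n : ℝ)) • g ↔
      Ric = ((1 / (2 * (n : ℝ))) * (2 * trG g hg Ric - ((n : ℝ) - 1) * π P)) • g
        + (((n : ℝ) - 1) / 2) • ππ := by
  have hn0 : (n : ℝ) ≠ 0 := by positivity
  have htrππ : trG g hg ππ = π P := by
    rw [hππ, trG_smulRight, hπ, toDual_symm_flip hg hgs]
  have htr5 : trG g hg Ric5 = trG g hg Ric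
      - ((((n : ℝ) - 1) / 2) * (3 * ω + π P)) * n - ((n : ℝ) - 1) / 2 * π P := by
    rw [hRic5, trG_sub, trG_sub, trG_smul, trG_smul, trG_self, hdim, htrππ]
  have hscalar : trG g hg Ric5 / n + (((n : ℝ) - 1) / 2) * (3 * ω + π P)
      = (1 / (2 * (n : ℝ))) * (2 * trG g hg Ric - ((n : ℝ) - 1) * π P) := by
    rw [htr5]
    field_simp
    ring
  rw [← hscalar]
  exact eq_smul_iff_of_eq_sub_sub (M := LinearMap.BilinForm ℝ V) hRic5 _

theorem stmt_6 {V : Type*} [AddCommGroup V] [Module ℝ V] [FiniteDimensional ℝ V]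
    (n : ℕ) (hn : 3 ≤ n) (hdim : Module.finrank ℝ V = n)
    (g : LinearMap.BilinForm ℝ V) (hg : g.Nondegenerate) (hgs : g.IsSymm)
    (P : V) (π : V →ₗ[ℝ] ℝ) (hπ : π = g.flip P) (ω : ℝ)
    (ππ : LinearMap.BilinForm ℝ V) (hππ : ππ = π.smulRight π)
    (Ric : LinearMap.BilinForm ℝ V) (hRicSymm : Ric.IsSymm)
    (Ric5 : LinearMap.BilinForm ℝ V)
    (hRic5 : Ric5 = Ric - ((((n : ℝ) - 1) / 2) * (3 * ω + π P)) • g - (((n : ℝ) - 1) / 2) • ππ) :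
    Ric5 = (trG g hg Ric5 / (n : ℝ)) • g ↔
      Ric = ((1 / (2 * (n : ℝ))) * (2 * trG g hg Ric - ((n : ℝ) - 1) * π P)) • g
        + (((n : ℝ) - 1) / 2) • ππ :=
  stmt_6_general n hn hdim g hg hgs P π hπ ω ππ hππ Ric Ric5 hRic5
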